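/- arXiv:2507.15080 — 5 statements merged into one kernel-verified Lean document; each statement's English description precedes it below -/
import Mathlib

section
/- If G is a simple graph of order n ≥ 3 that has no full vertex (i.e., no vertex adjacent to all other vertices), then the fair coalition number of G is at least twice the fair domatic number of G: C_f(G) ≥ 2·d_f(G). -/
open SimpleGraph

/-- `D` is a fair dominating set of `G`: it is a dominating set and there is some
`k ≥ 1` such that every vertex outside `D` has exactly `k` neighbors in `D`. -/
def IsFairDomSet {V : Type*} (G : SimpleGraph V) (D : Set V) : Prop :=
  (∀ v ∉ D, ∃ u ∈ D, G.Adj v u) ∧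
  ∃ k : ℕ, 1 ≤ k ∧ ∀ v ∉ D, (G.neighborSet v ∩ D).ncard = k

/-- A fair coalition partition of `G`: a partition of the vertex set into nonempty parts,
each of which is either a singleton fair dominating set, or is not a fair dominating set
but forms a fair coalition with another part that is not a fair dominating set. -/
def IsFairCoalitionPartition {V : Type*} (G : SimpleGraph V) (P : Finset (Set V)) : Prop :=
  (∀ A ∈ P, A.Nonempty) ∧
  (P : Set (Set V)).PairwiseDisjoint id ∧
  ⋃₀ (P : Set (Set V)) = Set.univ ∧
  ∀ A ∈ P, ((∃ v, A = {v}) ∧ IsFairDomSet G A) ∨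
    (¬ IsFairDomSet G A ∧ ∃ B ∈ P, B ≠ A ∧ ¬ IsFairDomSet G B ∧ IsFairDomSet G (A ∪ B))

/-- The fair coalition number of `G`: the maximum number of parts in a fair
coalition partition of `G`. -/
noncomputable def fairCoalitionNumber {V : Type*} (G : SimpleGraph V) : ℕ :=
  sSup {n | ∃ P : Finset (Set V), IsFairCoalitionPartition G P ∧ P.card = n}
/-- A fair domatic partition of `G`: a partition of the vertex set into fair dominating sets. -/
def IsFairDomaticPartition {V : Type*} (G : SimpleGraph V) (P : Finset (Set V)) : Prop :=
  (∀ A ∈ P, A.Nonempty) ∧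
  (P : Set (Set V)).PairwiseDisjoint id ∧
  ⋃₀ (P : Set (Set V)) = Set.univ ∧
  ∀ A ∈ P, IsFairDomSet G A

/-- The fair domatic number of `G`. -/
noncomputable def fairDomaticNumber {V : Type*} (G : SimpleGraph V) : ℕ :=
  sSup {n | ∃ P : Finset (Set V), IsFairDomaticPartition G P ∧ P.card = n}

/-!
Take a fair domatic partition with `d_f(G)` parts. Without full vertices no singleton is fair
dominating, so inside each part `D` we may choose `R ⊆ D` maximal among the nonempty subsets that
are not fair dominating. Then `R ≠ D`, and by maximality `R ∪ {y}` is fair dominating for every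
`y ∈ D \ R`; hence `R` and the singletons of `D \ R` split `D` into at least two parts, each in a
fair coalition with another. Refining every part of the domatic partition this way yields a fair
coalition partition with at least `2 d_f(G)` parts.
-/

open Finset

theorem two_mul_sSup_le_sSup {S T : Set ℕ} (hT : BddAbove T) (h : ∀ n ∈ S, ∃ m ∈ T, 2 * n ≤ m) :
    2 * sSup S ≤ sSup T := by
  obtain rfl | hS := S.eq_empty_or_nonempty
  · simp
  obtain ⟨b, hb⟩ := hT
  have hSb : BddAbove S := ⟨b, fun n hn => by
    obtain ⟨m, hm, hnm⟩ := h n hn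
    have := hb hm
    omega⟩
  obtain ⟨m, hm, hle⟩ := h _ (Nat.sSup_mem hS hSb)
  exact hle.trans (le_csSup ⟨b, hb⟩ hm)

section Partitions

variable {α : Type*}

theorem exists_finpartition_parts_eq_iff {P : Finset (Set α)} {D : Set α} :
    (∃ F : Finpartition D, F.parts = P) ↔
      (∀ A ∈ P, A.Nonempty) ∧ (P : Set (Set α)).PairwiseDisjoint id ∧ ⋃₀ (P : Set (Set α)) = D := by
  constructor
  · rintro ⟨F, rfl⟩
    exact ⟨fun A hA => Set.nonempty_iff_ne_empty.mpr (F.ne_bot hA), F.disjoint,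
      by rw [← sup_id_set_eq_sUnion, F.sup_parts]⟩
  · rintro ⟨hne, hdisj, hcover⟩
    exact ⟨⟨P, supIndep_iff_pairwiseDisjoint.mpr hdisj, by rwa [sup_id_set_eq_sUnion],
      fun h => (hne ∅ h).ne_empty rfl⟩, rfl⟩

theorem exists_finpartition_insert_singletons [Finite α] {R D : Set α} (hRD : R ⊆ D)
    (hR : R.Nonempty) :
    ∃ F : Finpartition D, ∀ A, A ∈ F.parts ↔ A = R ∨ ∃ y ∈ D \ R, A = {y} := by
  classical
  set P := insert R ((D \ R).toFinite.toFinset.image fun y => ({y} : Set α))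
  have hmem : ∀ A, A ∈ P ↔ A = R ∨ ∃ y ∈ D \ R, A = {y} := by
    simp [P, eq_comm]
  suffices ∃ F : Finpartition D, F.parts = P from
    let ⟨F, hF⟩ := this; ⟨F, fun A => hF ▸ hmem A⟩
  refine exists_finpartition_parts_eq_iff.mpr ⟨?_, ?_, ?_⟩
  · intro A hA
    obtain rfl | ⟨y, -, rfl⟩ := (hmem A).mp hA
    exacts [hR, Set.singleton_nonempty y]
  · intro A hA B hB hAB
    rw [mem_coe, hmem] at hA hB
    obtain rfl | ⟨y, hy, rfl⟩ := hA <;> obtain rfl | ⟨z, hz, rfl⟩ := hB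
    · exact absurd rfl hAB
    · exact Set.disjoint_singleton_right.mpr hz.2
    · exact Set.disjoint_singleton_left.mpr hy.2
    · exact Set.disjoint_singleton.mpr fun h => hAB (h ▸ rfl)
  · simp only [P, coe_insert, coe_image, Set.Finite.coe_toFinset, Set.sUnion_insert,
      Set.sUnion_image, Set.biUnion_of_singleton, Set.union_sdiff_cancel hRD]

theorem bddAbove_setOf_card [Finite α] (p : Finset α → Prop) :
    BddAbove {n | ∃ s, p s ∧ #s = n} :=
  ((Set.finite_range Finset.card).subset (by rintro _ ⟨s, -, rfl⟩; exact ⟨s, rfl⟩)).bddAbove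

end Partitions

section FairCoalition

variable {V : Type*} {G : SimpleGraph V}

theorem not_isFairDomSet_singleton (hfull : ∀ v : V, ∃ w : V, w ≠ v ∧ ¬ G.Adj v w) (x : V) :
    ¬ IsFairDomSet G {x} := by
  rintro ⟨hdom, -⟩
  obtain ⟨w, hwx, hnadj⟩ := hfull x
  obtain ⟨_, rfl, hadj⟩ := hdom w hwx
  exact hnadj hadj.symm

theorem exists_maximal_subset_not_isFairDomSet [Finite V] {D : Set V} {x : V} (hx : x ∈ D)
    (hxnot : ¬ IsFairDomSet G {x}) :
    ∃ R ⊆ D, R.Nonempty ∧ ¬ IsFairDomSet G R ∧ ∀ y ∈ D \ R, IsFairDomSet G (insert y R) := by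
  obtain ⟨R, ⟨hRD, hRne, hRnf⟩, hmax⟩ :=
    (Set.toFinite {R | R ⊆ D ∧ R.Nonempty ∧ ¬ IsFairDomSet G R}).exists_maximal
      ⟨{x}, Set.singleton_subset_iff.mpr hx, Set.singleton_nonempty x, hxnot⟩
  refine ⟨R, hRD, hRne, hRnf, fun y hy => by_contra fun hy' => hy.2 ?_⟩
  exact hmax ⟨Set.insert_subset hy.1 hRD, Set.insert_nonempty y R, hy'⟩ (Set.subset_insert y R)
    (Set.mem_insert y R)

/-- The second alternative in `IsFairCoalitionPartition`. -/
def IsFairCoalitionPart (G : SimpleGraph V) (P : Finset (Set V)) (A : Set V) : Prop :=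
  ¬ IsFairDomSet G A ∧ ∃ B ∈ P, B ≠ A ∧ ¬ IsFairDomSet G B ∧ IsFairDomSet G (A ∪ B)

theorem IsFairCoalitionPart.mono {P Q : Finset (Set V)} {A : Set V}
    (h : IsFairCoalitionPart G P A) (hPQ : P ⊆ Q) : IsFairCoalitionPart G Q A :=
  let ⟨hA, B, hB, hBA, hB', hAB⟩ := h
  ⟨hA, B, hPQ hB, hBA, hB', hAB⟩

theorem IsFairDomSet.exists_finpartition_isFairCoalitionPart [Finite V]
    (hfull : ∀ v : V, ∃ w : V, w ≠ v ∧ ¬ G.Adj v w) {D : Set V} (hD : IsFairDomSet G D)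
    (hne : D.Nonempty) :
    ∃ F : Finpartition D, 2 ≤ #F.parts ∧ ∀ A ∈ F.parts, IsFairCoalitionPart G F.parts A := by
  obtain ⟨x, hx⟩ := hne
  obtain ⟨R, hRD, hRne, hRnf, hRinsert⟩ :=
    exists_maximal_subset_not_isFairDomSet hx (not_isFairDomSet_singleton hfull x)
  obtain ⟨y, hy⟩ : (D \ R).Nonempty :=
    Set.sdiff_nonempty.mpr fun hDR => hRnf (hRD.antisymm hDR ▸ hD)
  obtain ⟨F, hF⟩ := exists_finpartition_insert_singletons hRD hRne
  have hR : R ∈ F.parts := (hF R).mpr (Or.inl rfl)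
  have hR_ne_singleton : ∀ z ∈ D \ R, R ≠ {z} := fun z hz h => hz.2 (h ▸ rfl)
  have hy_mem : {y} ∈ F.parts := (hF _).mpr (Or.inr ⟨y, hy, rfl⟩)
  refine ⟨F, one_lt_card_iff.mpr ⟨R, {y}, hR, hy_mem, hR_ne_singleton y hy⟩, fun A hA => ?_⟩
  obtain rfl | ⟨z, hz, rfl⟩ := (hF A).mp hA
  · refine ⟨hRnf, {y}, hy_mem, (hR_ne_singleton y hy).symm,
      not_isFairDomSet_singleton hfull y, ?_⟩
    rw [Set.union_singleton]
    exact hRinsert y hy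
  · refine ⟨not_isFairDomSet_singleton hfull z, R, hR, hR_ne_singleton z hz, hRnf, ?_⟩
    rw [Set.singleton_union]
    exact hRinsert z hz

theorem isFairCoalitionPartition_bind (F : Finpartition (Set.univ : Set V))
    (Q : ∀ A ∈ F.parts, Finpartition A)
    (hQ : ∀ A hA, ∀ B ∈ (Q A hA).parts, IsFairCoalitionPart G (Q A hA).parts B) :
    IsFairCoalitionPartition G (F.bind Q).parts := by
  obtain ⟨hne, hdisj, hcover⟩ := exists_finpartition_parts_eq_iff.mp ⟨F.bind Q, rfl⟩
  refine ⟨hne, hdisj, hcover, fun B hB => Or.inr ?_⟩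
  obtain ⟨A, hA, hBA⟩ := Finpartition.mem_bind.mp hB
  exact (hQ A hA B hBA).mono fun C hC => Finpartition.mem_bind.mpr ⟨A, hA, hC⟩

end FairCoalition

theorem stmt_0_general {V : Type*} [Fintype V] (G : SimpleGraph V)
    (hfull : ∀ v : V, ∃ w : V, w ≠ v ∧ ¬ G.Adj v w) :
    2 * fairDomaticNumber G ≤ fairCoalitionNumber G := by
  refine two_mul_sSup_le_sSup (bddAbove_setOf_card _) ?_
  rintro _ ⟨P, ⟨hne, hdisj, hcover, hfair⟩, rfl⟩
  obtain ⟨F, rfl⟩ := exists_finpartition_parts_eq_iff.mpr ⟨hne, hdisj, hcover⟩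
  choose Q hQcard hQ using fun A hA =>
    (hfair A hA).exists_finpartition_isFairCoalitionPart hfull (hne A hA)
  refine ⟨_, ⟨_, isFairCoalitionPartition_bind F Q hQ, rfl⟩, ?_⟩
  calc 2 * #F.parts = ∑ _A ∈ F.parts.attach, 2 := by simp [mul_comm]
    _ ≤ ∑ A ∈ F.parts.attach, #(Q _ A.2).parts := sum_le_sum fun A _ => hQcard A A.2
    _ = #(F.bind Q).parts := (Finpartition.card_bind Q).symm

theorem stmt_0 {V : Type*} [Fintype V] (G : SimpleGraph V)
    (hn : 3 ≤ Fintype.card V)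
    (hfull : ∀ v : V, ∃ w : V, w ≠ v ∧ ¬ G.Adj v w) :
    2 * fairDomaticNumber G ≤ fairCoalitionNumber G :=
  stmt_0_general G hfull
end

section
/- For every integer k ≥ 2, the fair coalition number of the cycle graph C_{3k} on 3k vertices equals 6. -/
open SimpleGraph

/-!
On a cycle a fair dominating set is 1-fair or 2-fair, and since each of its vertices dominates
only three vertices it has at least `n / 3` elements.

Lower bound: split each residue class mod 3 of `C_{3k}` into one vertex and the rest. Neither
piece dominates the other vertices of its class, but the whole class is 1-fair dominating.

Upper bound: no part is fair (a fair singleton would force `n ≤ 3`), so every part has a partner.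
A non-fair `A` has at most three partners, because there are three vertices that every `B` with
`A ∪ B` fair must hit. If any two coalitions share a part, all parts are partners of the two
parts of one coalition, so there are at most six. Otherwise take disjoint coalitions `a ∪ b` and
`c ∪ d`. Three pairwise disjoint fair sets cover the cycle, so with seven parts each of the at
least three remaining parts has its partner among `a, b, c, d`. A vertex outside `a ∪ b ∪ c ∪ d`
has one neighbour in `a ∪ b` and one in `c ∪ d`. Hence two remaining parts `X`, `Y` cannot pair
with `a` and with `b` respectively (both partners would contain the `a ∪ b`-neighbour of a vertex
of a third part), nor both with `a` (then `a ∪ b`, `X ∪ a` and `Y ∪ a` are all 1-fair, which fails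
two steps away from a vertex of `b`). So at most one remaining part pairs into each of the two
coalitions.
-/

section general
variable {α : Type*}

lemma Set.ncard_pair_inter_eq_two_iff {a b : α} {D : Set α} (hab : a ≠ b) :
    ({a, b} ∩ D).ncard = 2 ↔ a ∈ D ∧ b ∈ D := by
  by_cases ha : a ∈ D <;> by_cases hb : b ∈ D <;>
    simp [Set.insert_inter_of_mem, Set.insert_inter_of_notMem, ha, hb, Set.ncard_pair hab]

lemma Set.ncard_pair_inter_eq_one_iff {a b : α} {D : Set α} (hab : a ≠ b) :
    ({a, b} ∩ D).ncard = 1 ↔ (a ∈ D ↔ b ∉ D) := by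
  by_cases ha : a ∈ D <;> by_cases hb : b ∈ D <;>
    simp [Set.insert_inter_of_mem, Set.insert_inter_of_notMem, ha, hb, Set.ncard_pair hab]

lemma Set.ncard_pair_inter_le_two {a b : α} {D : Set α} : ({a, b} ∩ D).ncard ≤ 2 :=
  (Set.ncard_le_ncard Set.inter_subset_left).trans <|
    (Set.ncard_insert_le _ _).trans (by rw [Set.ncard_singleton])

lemma Finset.card_le_card_of_pairwiseDisjoint_meets {S : Finset (Set α)}
    (hS : (S : Set (Set α)).PairwiseDisjoint id) {T : Finset α} (hT : ∀ B ∈ S, ∃ t ∈ T, t ∈ B) :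
    S.card ≤ T.card :=
  Finset.card_le_card_of_forall_subsingleton (fun B t => t ∈ B) hT fun t _ _ hB _ hB' =>
    hS.elim hB.1 hB'.1 (Set.not_disjoint_iff.mpr ⟨t, hB.2, hB'.2⟩)

lemma Finset.subset_of_pairwiseDisjoint_of_covers {P s : Finset (Set α)}
    (hne : ∀ A ∈ P, A.Nonempty) (hP : (P : Set (Set α)).PairwiseDisjoint id) (hs : s ⊆ P)
    (hcover : ∀ v, ∃ A ∈ s, v ∈ A) : P ⊆ s := fun E hE => by
  obtain ⟨v, hv⟩ := hne E hE
  obtain ⟨A, hA, hvA⟩ := hcover v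
  rwa [hP.elim hE (hs hA) (Set.not_disjoint_iff.mpr ⟨v, hv, hvA⟩)]

lemma Set.PairwiseDisjoint.disjoint_union_union {P : Set (Set α)} (hP : P.PairwiseDisjoint id)
    {A B C D : Set α} (hA : A ∈ P) (hB : B ∈ P) (hC : C ∈ P) (hD : D ∈ P)
    (hCA : C ≠ A) (hCB : C ≠ B) (hDA : D ≠ A) (hDB : D ≠ B) : Disjoint (A ∪ B) (C ∪ D) :=
  Set.disjoint_union_right.mpr
    ⟨Set.disjoint_union_left.mpr ⟨hP hA hC hCA.symm, hP hB hC hCB.symm⟩,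
      Set.disjoint_union_left.mpr ⟨hP hA hD hDA.symm, hP hB hD hDB.symm⟩⟩

lemma card_le_six_of_intersecting [DecidableEq α] {s : Finset α}
    {r : α → α → Prop} [DecidableRel r] (hr : ∀ a b, r a b → r b a)
    (hdeg : ∀ a ∈ s, (s.filter (r a)).card ≤ 3) (hpartner : ∀ a ∈ s, ∃ b ∈ s, r a b)
    (hint : ∀ a ∈ s, ∀ b ∈ s, ∀ c ∈ s, ∀ d ∈ s, r a b → r c d → c = a ∨ c = b ∨ d = a ∨ d = b) :
    s.card ≤ 6 := by
  rcases s.eq_empty_or_nonempty with rfl | ⟨a, ha⟩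
  · simp
  obtain ⟨b, hb, hab⟩ := hpartner a ha
  have hcover : s ⊆ s.filter (r a) ∪ s.filter (r b) := fun x hx => by
    obtain ⟨y, hy, hxy⟩ := hpartner x hx
    simp only [Finset.mem_union, Finset.mem_filter]
    rcases hint a ha b hb x hx y hy hab hxy with rfl | rfl | rfl | rfl
    exacts [Or.inr ⟨hx, hr _ _ hab⟩, Or.inl ⟨hx, hab⟩, Or.inl ⟨hx, hr _ _ hxy⟩,
      Or.inr ⟨hx, hr _ _ hxy⟩]
  calc s.card ≤ (s.filter (r a)).card + (s.filter (r b)).card :=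
        (Finset.card_le_card hcover).trans (Finset.card_union_le _ _)
    _ ≤ 6 := by linarith [hdeg a ha, hdeg b hb]

end general

section fibers
variable {V ι : Type*} {f : V → ι}

lemma injective_preimage_singleton (hf : Function.Surjective f) :
    Function.Injective fun i => f ⁻¹' {i} :=
  fun _ _ h => Set.singleton_injective (Set.preimage_injective.mpr hf h)

open Classical in
lemma isFairCoalitionPartition_image_fiber [Fintype ι] (G : SimpleGraph V)
    (hf : Function.Surjective f) (σ : ι → ι) (hσ : ∀ i, σ i ≠ i)
    (hnf : ∀ i, ¬ IsFairDomSet G (f ⁻¹' {i}))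
    (hfair : ∀ i, IsFairDomSet G (f ⁻¹' {i} ∪ f ⁻¹' {σ i})) :
    IsFairCoalitionPartition G (Finset.univ.image fun i => f ⁻¹' {i}) := by
  simp only [IsFairCoalitionPartition, Finset.mem_image, Finset.mem_univ, true_and,
    forall_exists_index, forall_apply_eq_imp_iff, Finset.coe_image, Finset.coe_univ,
    Set.image_univ]
  refine ⟨fun i => (hf i).imp fun v hv => hv, ?_, ?_, fun i => Or.inr ⟨hnf i, _, ⟨σ i, rfl⟩,
    fun h => hσ i (injective_preimage_singleton hf h), hnf (σ i), hfair i⟩⟩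
  · rintro _ ⟨i, rfl⟩ _ ⟨j, rfl⟩ hij
    exact (Set.disjoint_singleton.mpr fun h => hij (by rw [h])).preimage f
  · exact Set.eq_univ_of_forall fun v => Set.mem_sUnion.mpr ⟨_, ⟨f v, rfl⟩, rfl⟩

end fibers

variable {n : ℕ} [NeZero n]

local notation "fair" => IsFairDomSet (cycleGraph n)

lemma cycleGraph_neighborSet_eq (hn : 2 ≤ n) (v : Fin n) :
    (cycleGraph n).neighborSet v = {v - 1, v + 1} := by
  obtain ⟨m, rfl⟩ := Nat.exists_eq_add_of_le' hn
  exact cycleGraph_neighborSet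

lemma Fin.sub_one_ne_add_one (hn : 3 ≤ n) (v : Fin n) : v - 1 ≠ v + 1 := by
  rw [Ne, sub_eq_iff_eq_add, add_assoc, left_eq_add, Fin.ext_iff, Fin.val_add, Fin.val_one',
    Nat.one_mod_eq_one.mpr (by omega), Fin.val_zero, Nat.mod_eq_of_lt (by omega)]
  omega

def IsOneFairCycle (D : Set (Fin n)) : Prop := ∀ v ∉ D, (v - 1 ∈ D ↔ v + 1 ∉ D)

lemma isFairDomSet_cycleGraph_iff (hn : 3 ≤ n) {D : Set (Fin n)} :
    fair D ↔ IsOneFairCycle D ∨ ∀ v ∉ D, v - 1 ∈ D ∧ v + 1 ∈ D := by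
  simp only [IsFairDomSet, IsOneFairCycle, cycleGraph_neighborSet_eq (by omega : 2 ≤ n),
    ← mem_neighborSet]
  constructor
  · rintro ⟨-, j, hj, hcount⟩
    by_cases hD : ∀ v, v ∈ D
    · exact Or.inl fun v hv => absurd (hD v) hv
    obtain ⟨v₀, hv₀⟩ := not_forall.mp hD
    have hj2 : j ≤ 2 := hcount v₀ hv₀ ▸ Set.ncard_pair_inter_le_two
    interval_cases j
    · exact Or.inl fun v hv =>
        (Set.ncard_pair_inter_eq_one_iff (Fin.sub_one_ne_add_one hn v)).mp (hcount v hv)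
    · exact Or.inr fun v hv =>
        (Set.ncard_pair_inter_eq_two_iff (Fin.sub_one_ne_add_one hn v)).mp (hcount v hv)
  · rintro (h | h)
    · refine ⟨fun v hv => ?_, 1, le_rfl, fun v hv =>
        (Set.ncard_pair_inter_eq_one_iff (Fin.sub_one_ne_add_one hn v)).mpr (h v hv)⟩
      by_cases h1 : v - 1 ∈ D
      · exact ⟨v - 1, h1, by simp⟩
      · exact ⟨v + 1, not_not.mp (mt (h v hv).mpr h1), by simp⟩
    · exact ⟨fun v hv => ⟨v - 1, (h v hv).1, by simp⟩, 2, by norm_num, fun v hv =>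
        (Set.ncard_pair_inter_eq_two_iff (Fin.sub_one_ne_add_one hn v)).mpr (h v hv)⟩

variable {D : Set (Fin n)} {v ε : Fin n}

lemma Fin.sub_add_of_step (hε : ε = 1 ∨ ε = -1) (v : Fin n) :
    (v - ε = v - 1 ∧ v + ε = v + 1) ∨ (v - ε = v + 1 ∧ v + ε = v - 1) := by
  rcases hε with rfl | rfl
  · exact Or.inl ⟨rfl, rfl⟩
  · exact Or.inr ⟨sub_neg_eq_add v 1, (sub_eq_add_neg v 1).symm⟩

lemma IsOneFairCycle.sub_mem_iff (h : IsOneFairCycle D) (hv : v ∉ D) (hε : ε = 1 ∨ ε = -1) :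
    v - ε ∈ D ↔ v + ε ∉ D := by
  have := h v hv
  rcases Fin.sub_add_of_step hε v with ⟨h₁, h₂⟩ | ⟨h₁, h₂⟩ <;> rw [h₁, h₂] <;> tauto

lemma IsFairDomSet.sub_mem_or_add_mem (hn : 3 ≤ n) (h : fair D) (hv : v ∉ D)
    (hε : ε = 1 ∨ ε = -1) : v - ε ∈ D ∨ v + ε ∈ D := by
  have : v - 1 ∈ D ∨ v + 1 ∈ D := by
    rcases (isFairDomSet_cycleGraph_iff hn).mp h with h | h
    · by_cases h₁ : v - 1 ∈ D
      · exact Or.inl h₁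
      · exact Or.inr (not_not.mp (mt (h v hv).mpr h₁))
    · exact Or.inl (h v hv).1
  rcases Fin.sub_add_of_step hε v with ⟨h₁, h₂⟩ | ⟨h₁, h₂⟩ <;> rw [h₁, h₂] <;> tauto

lemma IsFairDomSet.exists_add_mem (hn : 3 ≤ n) (h : fair D) (hv : v ∉ D) :
    ∃ ε : Fin n, (ε = 1 ∨ ε = -1) ∧ v + ε ∈ D := by
  rcases h.sub_mem_or_add_mem hn hv (Or.inl rfl) with h₁ | h₁
  · exact ⟨-1, Or.inr rfl, by rwa [← sub_eq_add_neg]⟩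
  · exact ⟨1, Or.inl rfl, h₁⟩

lemma IsFairDomSet.isOneFairCycle_of_add_notMem (hn : 3 ≤ n) (h : fair D) (hv : v ∉ D)
    (hε : ε = 1 ∨ ε = -1) (hvε : v + ε ∉ D) : IsOneFairCycle D := by
  refine ((isFairDomSet_cycleGraph_iff hn).mp h).resolve_right fun h₂ => hvε ?_
  have := h₂ v hv
  rcases Fin.sub_add_of_step hε v with ⟨-, h₁⟩ | ⟨-, h₁⟩ <;> rw [h₁] <;> tauto

lemma IsFairDomSet.isOneFairCycle_of_disjoint (hn : 3 ≤ n) {N : Set (Fin n)} (hD : fair D)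
    (hN : fair N) (hDN : Disjoint D N) (hvD : v ∉ D) (hvN : v ∉ N) : IsOneFairCycle D := by
  obtain ⟨ε, hε, hvε⟩ := hN.exists_add_mem hn hvN
  exact hD.isOneFairCycle_of_add_notMem hn hvD hε fun h => Set.disjoint_left.mp hDN h hvε

lemma exists_sub_mem_add_mem_of_disjoint (hn : 3 ≤ n) {M N : Set (Fin n)} (hM : fair M)
    (hN : fair N) (hMN : Disjoint M N) (hvM : v ∉ M) (hvN : v ∉ N) :
    ∃ ε : Fin n, (ε = 1 ∨ ε = -1) ∧ v - ε ∈ M ∧ v + ε ∈ N := by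
  obtain ⟨ε, hε, hvε⟩ := hN.exists_add_mem hn hvN
  exact ⟨ε, hε, (hM.sub_mem_or_add_mem hn hvM hε).resolve_right
    fun h => Set.disjoint_left.mp hMN h hvε, hvε⟩

lemma IsFairDomSet.card_le_three_mul_ncard (hn : 3 ≤ n) (h : fair D) : n ≤ 3 * D.ncard := by
  classical
  have hcover : (Finset.univ : Finset (Fin n)) ⊆
      D.toFinset.biUnion fun d => {d - 1, d, d + 1} := by
    intro v _
    simp only [Finset.mem_biUnion, Set.mem_toFinset, Finset.mem_insert, Finset.mem_singleton]
    by_cases hv : v ∈ D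
    · exact ⟨v, hv, by simp⟩
    rcases h.sub_mem_or_add_mem hn hv (Or.inl rfl) with h₁ | h₁
    · exact ⟨v - 1, h₁, by simp⟩
    · exact ⟨v + 1, h₁, by simp⟩
  calc n = (Finset.univ : Finset (Fin n)).card := (Finset.card_fin n).symm
    _ ≤ ∑ d ∈ D.toFinset, ({d - 1, d, d + 1} : Finset (Fin n)).card :=
        (Finset.card_le_card hcover).trans Finset.card_biUnion_le
    _ ≤ ∑ d ∈ D.toFinset, 3 := Finset.sum_le_sum fun _ _ => Finset.card_le_three
    _ = 3 * D.ncard := by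
        rw [Finset.sum_const, smul_eq_mul, mul_comm, Set.ncard_eq_toFinset_card']

lemma not_isFairDomSet_singleton_s2 (hn : 4 ≤ n) (v : Fin n) : ¬ fair {v} := fun h => by
  have := h.card_le_three_mul_ncard (by omega)
  rw [Set.ncard_singleton] at this
  omega

lemma union_union_eq_univ_of_fair (hn : 3 ≤ n) {D₁ D₂ D₃ : Set (Fin n)}
    (h₁ : fair D₁) (h₂ : fair D₂) (h₃ : fair D₃)
    (h₁₂ : Disjoint D₁ D₂) (h₁₃ : Disjoint D₁ D₃) (h₂₃ : Disjoint D₂ D₃) :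
    D₁ ∪ D₂ ∪ D₃ = Set.univ := by
  refine Set.eq_of_subset_of_ncard_le (Set.subset_univ _) ?_
  rw [Set.ncard_univ, Nat.card_eq_fintype_card, Fintype.card_fin,
    Set.ncard_union_eq (Set.disjoint_union_left.mpr ⟨h₁₃, h₂₃⟩), Set.ncard_union_eq h₁₂]
  have := h₁.card_le_three_mul_ncard hn
  have := h₂.card_le_three_mul_ncard hn
  have := h₃.card_le_three_mul_ncard hn
  omega

lemma exists_card_le_three_forall_union_fair_meets (hn : 3 ≤ n) {A : Set (Fin n)}
    (hA : ¬ fair A) : ∃ T : Finset (Fin n), T.card ≤ 3 ∧ ∀ B, fair (A ∪ B) → ∃ t ∈ T, t ∈ B := by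
  rw [isFairDomSet_cycleGraph_iff hn, not_or] at hA
  obtain ⟨hA₁, hA₂⟩ := hA
  by_cases hdom : ∃ v ∉ A, v - 1 ∉ A ∧ v + 1 ∉ A
  · obtain ⟨v, hv, h₁, h₂⟩ := hdom
    refine ⟨{v - 1, v, v + 1}, Finset.card_le_three, fun B hB => ?_⟩
    by_cases hvB : v ∈ B
    · exact ⟨v, by simp, hvB⟩
    rcases hB.sub_mem_or_add_mem hn (v := v) (by simp [hv, hvB]) (Or.inl rfl) with h | h
    · exact ⟨v - 1, by simp, h.resolve_left h₁⟩
    · exact ⟨v + 1, by simp, h.resolve_left h₂⟩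
  obtain ⟨x, hx, hx₁, hx₂⟩ : ∃ x ∉ A, x - 1 ∈ A ∧ x + 1 ∈ A := by
    simp only [IsOneFairCycle, not_forall] at hA₁
    obtain ⟨x, hx, hx'⟩ := hA₁
    refine ⟨x, hx, ?_⟩
    by_cases h₁ : x - 1 ∈ A
    · exact ⟨h₁, by tauto⟩
    · exact absurd ⟨x, hx, h₁, by tauto⟩ hdom
  obtain ⟨y, hy, z, hz, hzA⟩ : ∃ y ∉ A, ∃ z, (z = y - 1 ∨ z = y + 1) ∧ z ∉ A := by
    simp only [not_forall, not_and_or] at hA₂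
    obtain ⟨y, hy, h | h⟩ := hA₂
    exacts [⟨y, hy, _, Or.inl rfl, h⟩, ⟨y, hy, _, Or.inr rfl, h⟩]
  -- if `B` avoids `x, y, z`, then `A ∪ B` is not 1-fair at `x` and not 2-fair at `y`
  refine ⟨{x, y, z}, Finset.card_le_three, fun B hB => ?_⟩
  by_contra! hT
  simp only [Finset.mem_insert, Finset.mem_singleton, forall_eq_or_imp, forall_eq] at hT
  rcases (isFairDomSet_cycleGraph_iff hn).mp hB with h | h
  · exact (h x (by simp [hx, hT.1])).mp (Or.inl hx₁) (Or.inl hx₂)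
  · have := h y (by simp [hy, hT.2.1])
    rcases hz with rfl | rfl <;> simp_all

open Classical in
lemma card_filter_union_fair_le_three (hn : 3 ≤ n) {P : Finset (Set (Fin n))}
    (hP : (P : Set (Set (Fin n))).PairwiseDisjoint id) {A : Set (Fin n)} (hA : ¬ fair A) :
    (P.filter fun B => fair (A ∪ B)).card ≤ 3 := by
  obtain ⟨T, hT, hmeet⟩ := exists_card_le_three_forall_union_fair_meets hn hA
  refine le_trans (Finset.card_le_card_of_pairwiseDisjoint_meets ?_ fun B hB => ?_) hT
  · exact hP.subset (Finset.coe_subset.mpr (Finset.filter_subset _ _))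
  · exact hmeet B (Finset.mem_filter.mp hB).2

lemma sub_mem_of_union_fair (hn : 3 ≤ n) {M N X t : Set (Fin n)} (hMN : Disjoint M N)
    (hXM : Disjoint X M) (hXN : Disjoint X N) (htM : t ⊆ M) (hf : fair (X ∪ t))
    (hvX : v ∉ X) (hvM : v ∉ M) (hε : ε = 1 ∨ ε = -1) (h₁ : v - ε ∈ M) (h₂ : v + ε ∈ N) :
    v - ε ∈ t := by
  rcases hf.sub_mem_or_add_mem hn (fun h => h.elim hvX fun h => hvM (htM h)) hε with h | h
  · exact h.resolve_left fun hX => Set.disjoint_left.mp hXM hX h₁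
  · exact (h.elim (fun hX => Set.disjoint_left.mp hXN hX h₂)
      fun ht => Set.disjoint_left.mp hMN (htM ht) h₂).elim

lemma not_fair_union_of_fair_union (hn : 3 ≤ n) {a b N X₁ X₂ : Set (Fin n)}
    (hab : Disjoint a b) (hb : b.Nonempty) (hM : fair (a ∪ b)) (hN : fair N)
    (hMN : Disjoint (a ∪ b) N) (hX₁M : Disjoint X₁ (a ∪ b)) (hX₁N : Disjoint X₁ N)
    (hX₂M : Disjoint X₂ (a ∪ b)) (hX₂N : Disjoint X₂ N) (hX₁₂ : Disjoint X₁ X₂)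
    (hX₁ : X₁.Nonempty) (hX₂ : X₂.Nonempty) (h₁ : fair (X₁ ∪ a)) : ¬ fair (X₂ ∪ a) := by
  intro h₂
  obtain ⟨w₁, hw₁⟩ := hX₁
  obtain ⟨w₂, hw₂⟩ := hX₂
  obtain ⟨u, hu⟩ := hb
  have hXaN : ∀ {X}, Disjoint X N → Disjoint (X ∪ a) N := fun hXN =>
    Set.disjoint_union_left.mpr ⟨hXN, Set.disjoint_union_left.mp hMN |>.1⟩
  have hM₁ := hM.isOneFairCycle_of_disjoint hn hN hMN
    (Set.disjoint_left.mp hX₁M hw₁) (Set.disjoint_left.mp hX₁N hw₁)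
  have hX₁a := h₁.isOneFairCycle_of_disjoint hn hN (hXaN hX₁N)
    (fun h => h.elim (Set.disjoint_left.mp hX₁₂ · hw₂)
      fun h => Set.disjoint_left.mp hX₂M hw₂ (Or.inl h)) (Set.disjoint_left.mp hX₂N hw₂)
  have hX₂a := h₂.isOneFairCycle_of_disjoint hn hN (hXaN hX₂N)
    (fun h => h.elim (Set.disjoint_left.mp hX₁₂ hw₁)
      fun h => Set.disjoint_left.mp hX₁M hw₁ (Or.inl h)) (Set.disjoint_left.mp hX₁N hw₁)
  -- `u + ε ∈ N` will see both `u ∈ b` and `u + ε + ε ∈ a` in the 1-fair set `a ∪ b`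
  obtain ⟨ε, hε, hy⟩ := hN.exists_add_mem hn (Set.disjoint_left.mp hMN (Or.inr hu))
  have hyu : u + ε - ε = u := add_sub_cancel_right u ε
  have hnext : ∀ {X}, IsOneFairCycle (X ∪ a) → Disjoint X (a ∪ b) → Disjoint X N →
      u + ε + ε ∈ X ∪ a := fun hX hXM hXN => by
    have := hX.sub_mem_iff (Set.disjoint_right.mp (hXaN hXN) hy) hε
    rw [hyu] at this
    exact not_not.mp (mt this.mpr fun h => h.elim (Set.disjoint_left.mp hXM · (Or.inr hu))
      fun h => Set.disjoint_left.mp hab h hu)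
  have hnext_a : u + ε + ε ∈ a := by
    rcases hnext hX₁a hX₁M hX₁N with h | h
    · exact (hnext hX₂a hX₂M hX₂N).resolve_left (Set.disjoint_left.mp hX₁₂ h)
    · exact h
  have := hM₁.sub_mem_iff (Set.disjoint_right.mp hMN hy) hε
  rw [hyu] at this
  exact this.mp (Or.inr hu) (Or.inl hnext_a)

open Classical in
lemma card_filter_union_fair_le_one (hn : 3 ≤ n) {a b N : Set (Fin n)}
    {Q : Finset (Set (Fin n))} (hQ : (Q : Set (Set (Fin n))).PairwiseDisjoint id)
    (hQne : ∀ X ∈ Q, X.Nonempty) (hQ₃ : 3 ≤ Q.card) (hQM : ∀ X ∈ Q, Disjoint X (a ∪ b))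
    (hQN : ∀ X ∈ Q, Disjoint X N) (hab : Disjoint a b) (ha : a.Nonempty) (hb : b.Nonempty)
    (hM : fair (a ∪ b)) (hN : fair N) (hMN : Disjoint (a ∪ b) N) :
    (Q.filter fun X => fair (X ∪ a) ∨ fair (X ∪ b)).card ≤ 1 := by
  refine Finset.card_le_one.mpr fun X hX Y hY => ?_
  by_contra hXY
  rw [Finset.mem_filter] at hX hY
  obtain ⟨Z, hZ, hZXY⟩ := Finset.exists_mem_notMem_of_card_lt_card
    (Finset.card_le_two.trans_lt hQ₃ : ({X, Y} : Finset (Set (Fin n))).card < Q.card)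
  simp only [Finset.mem_insert, Finset.mem_singleton, not_or] at hZXY
  obtain ⟨v, hv⟩ := hQne Z hZ
  have hvM := Set.disjoint_left.mp (hQM Z hZ) hv
  obtain ⟨ε, hε, h₁, h₂⟩ := exists_sub_mem_add_mem_of_disjoint hn hM hN hMN hvM
    (Set.disjoint_left.mp (hQN Z hZ) hv)
  have hmem : ∀ W ∈ Q, W ≠ Z → ∀ t ⊆ a ∪ b, fair (W ∪ t) → v - ε ∈ t := fun W hW hWZ t ht hf =>
    sub_mem_of_union_fair hn hMN (hQM W hW) (hQN W hW) ht hf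
      (Set.disjoint_right.mp (hQ hW hZ hWZ) hv) hvM hε h₁ h₂
  have hXY' : Disjoint X Y := hQ hX.1 hY.1 hXY
  rcases hX.2 with hXa | hXb <;> rcases hY.2 with hYa | hYb
  · exact not_fair_union_of_fair_union hn hab hb hM hN hMN (hQM X hX.1) (hQN X hX.1)
      (hQM Y hY.1) (hQN Y hY.1) hXY' (hQne X hX.1) (hQne Y hY.1) hXa hYa
  · exact Set.disjoint_left.mp hab (hmem X hX.1 (Ne.symm hZXY.1) a Set.subset_union_left hXa)
      (hmem Y hY.1 (Ne.symm hZXY.2) b Set.subset_union_right hYb)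
  · exact Set.disjoint_left.mp hab (hmem Y hY.1 (Ne.symm hZXY.2) a Set.subset_union_left hYa)
      (hmem X hX.1 (Ne.symm hZXY.1) b Set.subset_union_right hXb)
  · rw [Set.union_comm a b] at hM hMN hQM
    exact not_fair_union_of_fair_union hn hab.symm ha hM hN hMN (hQM X hX.1) (hQN X hX.1)
      (hQM Y hY.1) (hQN Y hY.1) hXY' (hQne X hX.1) (hQne Y hY.1) hXb hYb

namespace IsFairCoalitionPartition

variable {P : Finset (Set (Fin n))}

lemma not_fair (hn : 4 ≤ n) (hP : IsFairCoalitionPartition (cycleGraph n) P) {A : Set (Fin n)}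
    (hA : A ∈ P) : ¬ fair A := by
  rcases hP.2.2.2 A hA with ⟨⟨v, rfl⟩, h⟩ | ⟨h, -⟩
  exacts [absurd h (not_isFairDomSet_singleton_s2 hn v), h]

lemma exists_partner (hn : 4 ≤ n) (hP : IsFairCoalitionPartition (cycleGraph n) P)
    {A : Set (Fin n)} (hA : A ∈ P) : ∃ B ∈ P, B ≠ A ∧ fair (A ∪ B) := by
  rcases hP.2.2.2 A hA with ⟨⟨v, rfl⟩, h⟩ | ⟨-, B, hB, hBA, -, h⟩
  exacts [absurd h (not_isFairDomSet_singleton_s2 hn v), ⟨B, hB, hBA, h⟩]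

lemma card_le_six_of_three_disjoint_coalitions (hn : 3 ≤ n)
    (hP : IsFairCoalitionPartition (cycleGraph n) P) {a b c d e f : Set (Fin n)} (ha : a ∈ P)
    (hb : b ∈ P) (hc : c ∈ P) (hd : d ∈ P) (he : e ∈ P) (hf : f ∈ P)
    (hab : fair (a ∪ b)) (hcd : fair (c ∪ d)) (hef : fair (e ∪ f))
    (h₁ : Disjoint (a ∪ b) (c ∪ d)) (h₂ : Disjoint (a ∪ b) (e ∪ f))
    (h₃ : Disjoint (c ∪ d) (e ∪ f)) : P.card ≤ 6 := by
  have hcover := union_union_eq_univ_of_fair hn hab hcd hef h₁ h₂ h₃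
  refine (Finset.card_le_card (Finset.subset_of_pairwiseDisjoint_of_covers hP.1 hP.2.1
    (s := {a, b, c, d, e, f}) (by simp [Finset.insert_subset_iff, *]) fun v => ?_)).trans
    Finset.card_le_six
  have : v ∈ a ∪ b ∪ (c ∪ d) ∪ (e ∪ f) := hcover ▸ Set.mem_univ v
  simp only [Set.mem_union] at this
  simp only [Finset.mem_insert, Finset.mem_singleton, exists_eq_or_imp, exists_eq_left]
  tauto

lemma fair_union_of_mem_sdiff (hn : 4 ≤ n) (hP : IsFairCoalitionPartition (cycleGraph n) P)
    (h₇ : 7 ≤ P.card) {a b c d X : Set (Fin n)} (ha : a ∈ P) (hb : b ∈ P) (hc : c ∈ P)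
    (hd : d ∈ P) (hca : c ≠ a) (hcb : c ≠ b) (hda : d ≠ a) (hdb : d ≠ b)
    (hfab : fair (a ∪ b)) (hfcd : fair (c ∪ d)) (hX : X ∈ P \ {a, b, c, d}) :
    (fair (X ∪ a) ∨ fair (X ∪ b)) ∨ (fair (X ∪ c) ∨ fair (X ∪ d)) := by
  simp only [Finset.mem_sdiff, Finset.mem_insert, Finset.mem_singleton, not_or] at hX
  obtain ⟨hXP, hXa, hXb, hXc, hXd⟩ := hX
  obtain ⟨B, hB, -, hXB⟩ := hP.exists_partner hn hXP
  by_contra hB'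
  have hB'' : B ≠ a ∧ B ≠ b ∧ B ≠ c ∧ B ≠ d := by
    refine ⟨?_, ?_, ?_, ?_⟩ <;> rintro rfl <;> tauto
  have hd₄ := @hP.2.1.disjoint_union_union
  have := hP.card_le_six_of_three_disjoint_coalitions (by omega) ha hb hc hd hXP hB hfab hfcd
    hXB (hd₄ ha hb hc hd hca hcb hda hdb) (hd₄ ha hb hXP hB hXa hXb hB''.1 hB''.2.1)
    (hd₄ hc hd hXP hB hXc hXd hB''.2.2.1 hB''.2.2.2)
  omega

open Classical in
lemma false_of_disjoint_coalitions (hn : 4 ≤ n) (hP : IsFairCoalitionPartition (cycleGraph n) P)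
    (h₇ : 7 ≤ P.card) {a b c d : Set (Fin n)} (ha : a ∈ P) (hb : b ∈ P) (hc : c ∈ P)
    (hd : d ∈ P) (hca : c ≠ a) (hcb : c ≠ b) (hda : d ≠ a) (hdb : d ≠ b)
    (hfab : fair (a ∪ b)) (hfcd : fair (c ∪ d)) : False := by
  have hd₂ : ∀ {A B}, A ∈ P → B ∈ P → A ≠ B → Disjoint A B := fun hA hB h => hP.2.1 hA hB h
  have hMN := hP.2.1.disjoint_union_union ha hb hc hd hca hcb hda hdb
  obtain ⟨Q, hQ⟩ : ∃ Q : Finset (Set (Fin n)), Q = P \ {a, b, c, d} := ⟨_, rfl⟩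
  have hQP : ∀ X ∈ Q, X ∈ P ∧ X ≠ a ∧ X ≠ b ∧ X ≠ c ∧ X ≠ d := fun X hX => by
    simpa [hQ, not_or] using hX
  have hQ₃ : 3 ≤ Q.card := by
    have := Finset.le_card_sdiff {a, b, c, d} P
    have := Finset.card_le_four (a := a) (b := b) (c := c) (d := d)
    rw [hQ]
    omega
  have hcover : Q ⊆ Q.filter (fun X => fair (X ∪ a) ∨ fair (X ∪ b)) ∪
      Q.filter (fun X => fair (X ∪ c) ∨ fair (X ∪ d)) := fun X hX => by
    have := hP.fair_union_of_mem_sdiff hn h₇ ha hb hc hd hca hcb hda hdb hfab hfcd (hQ ▸ hX)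
    simp only [Finset.mem_union, Finset.mem_filter]
    tauto
  have hQdisj := hP.2.1.subset (Finset.coe_subset.mpr (hQ ▸ Finset.sdiff_subset))
  have hQne : ∀ X ∈ Q, X.Nonempty := fun X hX => hP.1 X (hQP X hX).1
  have hQM : ∀ X ∈ Q, Disjoint X (a ∪ b) := fun X hX => by
    obtain ⟨hX, hXa, hXb, -⟩ := hQP X hX
    exact Set.disjoint_union_right.mpr ⟨hd₂ hX ha hXa, hd₂ hX hb hXb⟩
  have hQN : ∀ X ∈ Q, Disjoint X (c ∪ d) := fun X hX => by
    obtain ⟨hX, -, -, hXc, hXd⟩ := hQP X hX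
    exact Set.disjoint_union_right.mpr ⟨hd₂ hX hc hXc, hd₂ hX hd hXd⟩
  have hab : Disjoint a b :=
    hd₂ ha hb fun h => hP.not_fair hn hb (by rwa [h, Set.union_self] at hfab)
  have hcd : Disjoint c d :=
    hd₂ hc hd fun h => hP.not_fair hn hd (by rwa [h, Set.union_self] at hfcd)
  have h₁ := card_filter_union_fair_le_one (by omega) hQdisj hQne hQ₃ hQM hQN hab (hP.1 a ha)
    (hP.1 b hb) hfab hfcd hMN
  have h₂ := card_filter_union_fair_le_one (by omega) hQdisj hQne hQ₃ hQN hQM hcd (hP.1 c hc)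
    (hP.1 d hd) hfcd hfab hMN.symm
  have := (Finset.card_le_card hcover).trans (Finset.card_union_le _ _)
  omega

theorem card_le_six (hn : 4 ≤ n) (hP : IsFairCoalitionPartition (cycleGraph n) P) :
    P.card ≤ 6 := by
  classical
  by_contra! h₇
  by_cases hint : ∀ a ∈ P, ∀ b ∈ P, ∀ c ∈ P, ∀ d ∈ P, fair (a ∪ b) → fair (c ∪ d) →
      c = a ∨ c = b ∨ d = a ∨ d = b
  · refine h₇.not_ge (card_le_six_of_intersecting (r := fun A B => fair (A ∪ B))
      (fun A B h => Set.union_comm A B ▸ h)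
      (fun A hA => card_filter_union_fair_le_three (by omega) hP.2.1 (hP.not_fair hn hA))
      (fun A hA => ?_) hint)
    obtain ⟨B, hB, -, h⟩ := hP.exists_partner hn hA
    exact ⟨B, hB, h⟩
  · simp only [not_forall, not_or] at hint
    obtain ⟨a, ha, b, hb, c, hc, d, hd, hab, hcd, hca, hcb, hda, hdb⟩ := hint
    exact hP.false_of_disjoint_coalitions hn h₇ ha hb hc hd hca hcb hda hdb hab hcd

end IsFairCoalitionPartition

lemma Fin.val_add_one_mod_three (h3 : 3 ∣ n) (v : Fin n) :
    (v + 1).val % 3 = (v.val + 1) % 3 := by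
  obtain ⟨m, rfl⟩ := h3
  have : 0 < m := Nat.pos_of_mul_pos_left (Nat.pos_of_neZero (3 * m))
  rw [Fin.val_add, Fin.val_one', Nat.mod_mod_of_dvd _ (dvd_mul_right 3 m),
    Nat.one_mod_eq_one.mpr (by omega)]

lemma Fin.val_sub_one_mod_three (h3 : 3 ∣ n) (v : Fin n) :
    (v - 1).val % 3 = (v.val + 2) % 3 := by
  obtain ⟨m, rfl⟩ := h3
  have : 0 < m := Nat.pos_of_mul_pos_left (Nat.pos_of_neZero (3 * m))
  rw [Fin.val_sub, Fin.val_one', Nat.mod_mod_of_dvd _ (dvd_mul_right 3 m),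
    Nat.one_mod_eq_one.mpr (by omega)]
  omega

lemma isOneFairCycle_residue (h3 : 3 ∣ n) {r : ℕ} (hr : r < 3) :
    IsOneFairCycle {v : Fin n | v.val % 3 = r} := fun v hv => by
  simp only [Set.mem_ofPred_eq] at hv ⊢
  rw [Fin.val_sub_one_mod_three h3, Fin.val_add_one_mod_three h3]
  omega

lemma not_fair_of_subset_residue (hn : 3 ≤ n) (h3 : 3 ∣ n) {r : ℕ}
    (hD : D ⊆ {v : Fin n | v.val % 3 = r}) (hv : v.val % 3 = r) (hvD : v ∉ D) : ¬ fair D :=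
  fun h => by
    rcases h.sub_mem_or_add_mem hn hvD (Or.inl rfl) with h' | h' <;> have := hD h' <;>
      simp only [Set.mem_ofPred_eq, Fin.val_sub_one_mod_three h3, Fin.val_add_one_mod_three h3]
        at this <;> omega

/-- The six parts are `{r}` and `{v | v ≡ r [MOD 3]} \ {r}` for `r < 3`. -/
lemma exists_isFairCoalitionPartition_card_eq_six (hn : 6 ≤ n) (h3 : 3 ∣ n) :
    ∃ P : Finset (Set (Fin n)), IsFairCoalitionPartition (cycleGraph n) P ∧ P.card = 6 := by
  classical
  let f : Fin n → Fin 3 × Bool := fun v => (⟨v.val % 3, Nat.mod_lt _ (by norm_num)⟩, v.val < 3)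
  have hfiber : ∀ i : Fin 3 × Bool,
      f ⁻¹' {i} = {v | v.val % 3 = i.1.val ∧ (v.val < 3 ↔ i.2)} := by
    rintro ⟨r, b⟩
    ext v
    cases b <;> simp [f, Prod.ext_iff, Fin.ext_iff]
  have hf : Function.Surjective f := by
    rintro ⟨r, b⟩
    cases b
    · exact ⟨⟨r.val + 3, by omega⟩, by simp [f, Fin.ext_iff, Nat.add_mod_right]⟩
    · exact ⟨⟨r.val, by omega⟩, by simp [f, Nat.mod_eq_of_lt r.isLt]⟩
  refine ⟨_, isFairCoalitionPartition_image_fiber _ hf (fun i => (i.1, !i.2)) (by simp)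
    (fun i => ?_) (fun i => ?_), ?_⟩
  · rw [hfiber]
    obtain ⟨r, b⟩ := i
    refine not_fair_of_subset_residue (by omega) h3 (fun v hv => hv.1)
      (v := ⟨if b then r.val + 3 else r.val, by split <;> omega⟩)
      (by split <;> simp [Nat.add_mod_right, Nat.mod_eq_of_lt r.isLt]) ?_
    cases b <;> simp
  · rw [hfiber, hfiber]
    have : {v : Fin n | v.val % 3 = i.1.val ∧ (v.val < 3 ↔ i.2)} ∪
        {v | v.val % 3 = i.1.val ∧ (v.val < 3 ↔ !i.2)} = {v | v.val % 3 = i.1.val} := by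
      ext v
      cases i.2 <;> simp <;> omega
    rw [this]
    exact (isFairDomSet_cycleGraph_iff (by omega)).mpr
      (Or.inl (isOneFairCycle_residue h3 i.1.isLt))
  · rw [Finset.card_image_of_injective _ (injective_preimage_singleton hf)]
    rfl

theorem stmt_2 (k : ℕ) (hk : 2 ≤ k) :
    fairCoalitionNumber (SimpleGraph.cycleGraph (3 * k)) = 6 := by
  have : NeZero (3 * k) := ⟨by omega⟩
  obtain ⟨P, hP, hcard⟩ :=
    exists_isFairCoalitionPartition_card_eq_six (by omega) (dvd_mul_right 3 k)
  refine IsGreatest.csSup_eq ⟨⟨P, hP, hcard⟩, ?_⟩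
  rintro _ ⟨Q, hQ, rfl⟩
  exact hQ.card_le_six (by omega)
end

section
/- Let G be a simple graph of order n with fair domination number γ_f(G). Then the fair coalition number of G satisfies C_f(G) ≤ n − γ_f(G) + 2. -/
open SimpleGraph

/-- The fair domination number of `G`: the minimum cardinality of a fair dominating set. -/
noncomputable def fairDominationNumber {V : Type*} (G : SimpleGraph V) : ℕ :=
  sInf {n | ∃ D : Set V, IsFairDomSet G D ∧ D.ncard = n}

/-!
Every nonempty fair coalition partition `P` has a subfamily of at most two parts whose union is a
fair dominating set, and so covers at least `γ_f(G)` vertices. Each remaining part contains at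
least one of the other at most `n - γ_f(G)` vertices, so `|P| ≤ n - γ_f(G) + 2`.
-/

open Finset

theorem fairDominationNumber_le_ncard {V : Type*} {G : SimpleGraph V} {D : Set V}
    (hD : IsFairDomSet G D) : fairDominationNumber G ≤ D.ncard :=
  Nat.sInf_le ⟨D, hD, rfl⟩

theorem Finset.sum_ncard_eq_card_of_sUnion_eq_univ {V : Type*} [Fintype V] {P : Finset (Set V)}
    (hdisj : (P : Set (Set V)).PairwiseDisjoint id) (hcov : ⋃₀ (P : Set (Set V)) = Set.univ) :
    ∑ A ∈ P, A.ncard = Fintype.card V := by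
  rw [← Nat.card_eq_fintype_card, ← Set.ncard_univ, ← hcov, Set.sUnion_eq_biUnion,
    P.finite_toSet.ncard_biUnion (s := fun A => A) (fun _ _ => Set.toFinite _) hdisj,
    finsum_mem_coe_finset]

theorem Finset.card_add_ncard_sUnion_le {V : Type*} [Finite V] {P Q : Finset (Set V)}
    (hne : ∀ A ∈ P, A.Nonempty) (hQP : Q ⊆ P) :
    #P + (⋃₀ (Q : Set (Set V))).ncard ≤ ∑ A ∈ P, A.ncard + #Q := by
  classical
  have hrest : #(P \ Q) ≤ ∑ A ∈ P \ Q, A.ncard := by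
    rw [card_eq_sum_ones]
    exact sum_le_sum fun A hA => (Set.ncard_pos (Set.toFinite A)).mpr (hne A (mem_sdiff.mp hA).1)
  have hunion : (⋃₀ (Q : Set (Set V))).ncard ≤ ∑ A ∈ Q, A.ncard := by
    simpa only [Set.sUnion_eq_biUnion, mem_coe] using Q.set_ncard_biUnion_le fun A => A
  rw [← card_sdiff_add_card_eq_card hQP, ← sum_sdiff hQP]
  omega

namespace IsFairCoalitionPartition

variable {V : Type*} {G : SimpleGraph V} {P : Finset (Set V)}

theorem exists_isFairDomSet_sUnion (hP : IsFairCoalitionPartition G P) (hPne : P.Nonempty) :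
    ∃ Q ⊆ P, #Q ≤ 2 ∧ IsFairDomSet G (⋃₀ (Q : Set (Set V))) := by
  classical
  obtain ⟨A, hA⟩ := hPne
  rcases hP.2.2.2 A hA with ⟨-, hAdom⟩ | ⟨-, B, hB, -, -, hABdom⟩
  · exact ⟨{A}, singleton_subset_iff.mpr hA, by simp, by simpa using hAdom⟩
  · refine ⟨{A, B}, insert_subset hA (singleton_subset_iff.mpr hB), card_le_two, ?_⟩
    simpa using hABdom

theorem card_add_ncard_sUnion_le [Fintype V] (hP : IsFairCoalitionPartition G P)
    {Q : Finset (Set V)} (hQP : Q ⊆ P) :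
    #P + (⋃₀ (Q : Set (Set V))).ncard ≤ Fintype.card V + #Q := by
  rw [← sum_ncard_eq_card_of_sUnion_eq_univ hP.2.1 hP.2.2.1]
  exact Finset.card_add_ncard_sUnion_le hP.1 hQP

end IsFairCoalitionPartition

theorem stmt_5 {V : Type*} [Fintype V] (G : SimpleGraph V) :
    fairCoalitionNumber G ≤ Fintype.card V - fairDominationNumber G + 2 := by
  refine csSup_le' ?_
  rintro _ ⟨P, hP, rfl⟩
  obtain rfl | hPne := P.eq_empty_or_nonempty
  · simp
  obtain ⟨Q, hQP, hQ, hQdom⟩ := hP.exists_isFairDomSet_sUnion hPne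
  have hcount := hP.card_add_ncard_sUnion_le hQP
  have hγ := fairDominationNumber_le_ncard hQdom
  omega
end

section
/- If T is a tree of order n ≥ 4 of the form T = T₁ ∘ K₁ (the corona of a tree T₁ with K₁), then the fair domination number of T equals n/2. -/
/-!
In `G ∘ K₁` a leaf `(u, true)` is adjacent only to its support `(u, false)`.
Hence every dominating set meets each pair `{(u, false), (u, true)}`, giving
`γ_f ≥ |V(G)|`, while the base copy of `V(G)` is a `1`-fair dominating set of that size.
-/

open SimpleGraph

/-- The corona `G ∘ K₁`: attach one new pendant vertex to each vertex of `G`.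
Vertex `(u, false)` is a copy of `u ∈ V(G)`; `(u, true)` is its pendant leaf. -/
def corona {V : Type*} (G : SimpleGraph V) : SimpleGraph (V × Bool) :=
  SimpleGraph.fromRel (fun a b =>
    (a.2 = false ∧ b.2 = false ∧ G.Adj a.1 b.1) ∨ (a.1 = b.1 ∧ a.2 = false ∧ b.2 = true))


namespace SimpleGraph

variable {V : Type*} (G : SimpleGraph V)

lemma corona_adj_leaf (u : V) (b : V × Bool) :
    (corona G).Adj (u, true) b ↔ b = (u, false) := by
  obtain ⟨b1, b2⟩ := b
  cases b2 <;> simp only [corona, fromRel_adj, Prod.mk.injEq, ne_eq] <;> aesop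

lemma isFairDomSet_corona_base : IsFairDomSet (corona G) {p | p.2 = false} := by
  have leaf_neighbors (v : V × Bool) (hv : v ∉ {p : V × Bool | p.2 = false}) :
      (corona G).neighborSet v ∩ {p | p.2 = false} = {(v.1, false)} := by
    obtain ⟨u, b⟩ := v
    obtain rfl : b = true := by simpa using hv
    ext p
    simp only [Set.mem_inter_iff, mem_neighborSet, corona_adj_leaf, Set.mem_ofPred_eq,
      Set.mem_singleton_iff, and_iff_left_iff_imp]
    rintro rfl; rfl
  refine ⟨fun v hv ↦ ?_, 1, le_rfl, fun v hv ↦ by rw [leaf_neighbors v hv, Set.ncard_singleton]⟩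
  have hmem : (v.1, false) ∈ (corona G).neighborSet v ∩ {p | p.2 = false} := by
    rw [leaf_neighbors v hv]; rfl
  exact ⟨_, hmem.2, hmem.1⟩

lemma ncard_corona_base [Finite V] : {p : V × Bool | p.2 = false}.ncard = Nat.card V := by
  have : {p : V × Bool | p.2 = false} = Set.range fun u ↦ (u, false) := by
    ext ⟨u, b⟩
    cases b <;> simp
  rw [this, Set.ncard_range_of_injective fun a b h ↦ (Prod.ext_iff.mp h).1]

lemma card_le_ncard_of_dominating_corona [Finite V] {D : Set (V × Bool)}
    (hD : ∀ v ∉ D, ∃ u ∈ D, (corona G).Adj v u) : Nat.card V ≤ D.ncard := by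
  classical
  let pick (u : V) : V × Bool := if (u, false) ∈ D then (u, false) else (u, true)
  have pick_inj : Function.Injective pick := by
    intro a b h
    simp only [pick] at h
    split_ifs at h <;> exact (Prod.ext_iff.mp h).1
  have pick_mem (u : V) : pick u ∈ D := by
    simp only [pick]
    split_ifs with h
    · exact h
    · by_contra hc
      obtain ⟨w, hwD, hadj⟩ := hD (u, true) hc
      rw [corona_adj_leaf] at hadj
      exact h (hadj ▸ hwD)
  calc Nat.card V = (Set.range pick).ncard := (Set.ncard_range_of_injective pick_inj).symm
    _ ≤ D.ncard := Set.ncard_le_ncard (Set.range_subset_iff.mpr pick_mem) (Set.toFinite D)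

theorem fairDominationNumber_corona [Finite V] :
    fairDominationNumber (corona G) = Nat.card V := by
  have hmem : Nat.card V ∈ {n | ∃ D : Set (V × Bool), IsFairDomSet (corona G) D ∧ D.ncard = n} :=
    ⟨_, isFairDomSet_corona_base G, ncard_corona_base⟩
  refine le_antisymm (Nat.sInf_le hmem) (le_csInf ⟨_, hmem⟩ ?_)
  rintro n ⟨D, hD, rfl⟩
  exact card_le_ncard_of_dominating_corona G hD.1

end SimpleGraph

theorem stmt_9_general {V : Type*} [Fintype V] (T₁ : SimpleGraph V) :
    fairDominationNumber (corona T₁) = Fintype.card (V × Bool) / 2 := by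
  rw [fairDominationNumber_corona, Nat.card_eq_fintype_card, Fintype.card_prod,
    Fintype.card_bool, Nat.mul_div_cancel _ two_pos]

theorem stmt_9 {V : Type*} [Fintype V] (T₁ : SimpleGraph V) (hT₁ : T₁.IsTree)
    (hn : 4 ≤ Fintype.card (V × Bool)) :
    fairDominationNumber (corona T₁) = Fintype.card (V × Bool) / 2 :=
  stmt_9_general T₁
end

section
/- Every cubic (3-regular) simple graph on 6 vertices has fair coalition number equal to 6. -/
/-! Splitting the six vertices into singletons gives the largest conceivable partition. No singleton
is fair dominating, since a vertex sees only three of the other five. Every vertex `v` has a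
neighbour `u` with which it shares no neighbour: otherwise each neighbour of `v` has at most one
neighbour among the two vertices outside the closed neighbourhood of `v`, while each of these two
vertices has at least two neighbours in `N(v)`, and `2 * 2 > 3 * 1`. Then `N(v)` and `N(u)` split
the six vertices, so `{v, u}` is a `1`-fair dominating set and each singleton `{v}` is in a fair
coalition with `{u}`. -/

open SimpleGraph

open Finset

section

variable {V : Type*} {G : SimpleGraph V}

theorem isFairDomSet_pair_of_adj_iff_not_adj {v u : V}
    (h : ∀ w, w ≠ v → w ≠ u → (G.Adj w v ↔ ¬ G.Adj w u)) :
    IsFairDomSet G {v, u} := by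
  have hone : ∀ w ∉ ({v, u} : Set V), ∃ x, G.neighborSet w ∩ {v, u} = {x} := by
    intro w hw
    simp only [Set.mem_insert_iff, Set.mem_singleton_iff, not_or] at hw
    by_cases hwv : G.Adj w v
    · refine ⟨v, Set.ext fun x => ?_⟩
      have := (h w hw.1 hw.2).1 hwv
      constructor
      · rintro ⟨hx, rfl | rfl⟩ <;> first | rfl | exact absurd hx this
      · rintro rfl; exact ⟨hwv, Or.inl rfl⟩
    · refine ⟨u, Set.ext fun x => ?_⟩
      have := not_not.1 (mt (h w hw.1 hw.2).2 hwv)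
      constructor
      · rintro ⟨hx, rfl | rfl⟩ <;> first | rfl | exact absurd hx hwv
      · rintro rfl; exact ⟨this, Or.inr rfl⟩
  refine ⟨fun w hw => ?_, 1, le_rfl, fun w hw => ?_⟩
  · obtain ⟨x, hx⟩ := hone w hw
    exact ⟨x, (hx.symm.subset rfl).2, (hx.symm.subset rfl).1⟩
  · obtain ⟨x, hx⟩ := hone w hw
    rw [hx, Set.ncard_singleton]

variable [Fintype V]

theorem not_isFairDomSet_singleton_of_degree_lt [DecidableRel G.Adj] {v : V}
    (h : G.degree v + 1 < Fintype.card V) : ¬ IsFairDomSet G {v} := by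
  classical
  rintro ⟨hdom, -⟩
  have hsub : univ.erase v ⊆ G.neighborFinset v := fun w hw => by
    obtain ⟨_, rfl, hwv⟩ := hdom w (by simpa using (mem_erase.1 hw).1)
    exact (mem_neighborFinset ..).2 hwv.symm
  have := card_le_card hsub
  rw [card_neighborFinset_eq_degree, card_erase_of_mem (mem_univ v), card_univ] at this
  omega

theorem IsFairCoalitionPartition.card_le {P : Finset (Set V)}
    (hP : IsFairCoalitionPartition G P) : #P ≤ Fintype.card V := by
  classical
  obtain ⟨hne, hdisj, -, -⟩ := hP
  calc #P ≤ #(P.biUnion fun A => A.toFinset) :=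
        card_le_card_biUnion (fun A hA B hB hAB => Set.disjoint_toFinset.2 (hdisj hA hB hAB))
          fun A hA => Set.toFinset_nonempty.2 (hne A hA)
    _ ≤ Fintype.card V := card_le_univ _

theorem isFairCoalitionPartition_singletons (hsingle : ∀ v, ¬ IsFairDomSet G {v})
    (hpair : ∀ v, ∃ u ≠ v, IsFairDomSet G {v, u}) :
    IsFairCoalitionPartition G (univ.map ⟨singleton, Set.singleton_injective⟩) := by
  simp only [IsFairCoalitionPartition, coe_map, coe_univ, Set.image_univ, mem_map, mem_univ,
    true_and, Function.Embedding.coeFn_mk, forall_exists_index, forall_apply_eq_imp_iff,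
    exists_exists_eq_and]
  refine ⟨fun v => Set.singleton_nonempty v, ?_, ?_, fun v => Or.inr ⟨hsingle v, ?_⟩⟩
  · rintro _ ⟨v, rfl⟩ _ ⟨u, rfl⟩ hvu
    exact Set.disjoint_singleton.2 (mt (congrArg _) hvu)
  · exact Set.eq_univ_of_forall fun v => Set.mem_sUnion.2 ⟨{v}, ⟨v, rfl⟩, rfl⟩
  · obtain ⟨u, huv, hvu⟩ := hpair v
    exact ⟨u, mt Set.singleton_eq_singleton_iff.1 huv, hsingle u, hvu⟩

theorem fairCoalitionNumber_eq_card_of_forall_pair (hsingle : ∀ v, ¬ IsFairDomSet G {v})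
    (hpair : ∀ v, ∃ u ≠ v, IsFairDomSet G {v, u}) :
    fairCoalitionNumber G = Fintype.card V := by
  have hbdd : ∀ n ∈ {n | ∃ P, IsFairCoalitionPartition G P ∧ #P = n}, n ≤ Fintype.card V := by
    rintro _ ⟨P, hP, rfl⟩
    exact hP.card_le
  have hmem : Fintype.card V ∈ {n | ∃ P, IsFairCoalitionPartition G P ∧ #P = n} :=
    ⟨_, isFairCoalitionPartition_singletons hsingle hpair, by rw [card_map, card_univ]⟩
  exact le_antisymm (csSup_le ⟨_, hmem⟩ hbdd) (le_csSup ⟨_, hbdd⟩ hmem)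

variable [DecidableRel G.Adj]

theorem exists_adj_disjoint_neighborFinset (hcard : Fintype.card V = 6)
    (hcubic : G.IsRegularOfDegree 3) (v : V) :
    ∃ u, G.Adj v u ∧ Disjoint (G.neighborFinset v) (G.neighborFinset u) := by
  classical
  by_contra! h
  set N := G.neighborFinset v
  set T := (insert v N)ᶜ
  have hN : #N = 3 := by rw [card_neighborFinset_eq_degree, hcubic v]
  have hT : #T = 2 := by
    rw [card_compl, card_insert_of_notMem (by simp [N]), hN, hcard]
  have hN_to_T : ∀ x ∈ N, #(T.bipartiteBelow G.Adj x) ≤ 1 := by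
    intro x hx
    obtain ⟨y, hyv, hyx⟩ := not_disjoint_iff.1 (h x ((mem_neighborFinset ..).1 hx))
    have hsub : T.bipartiteBelow G.Adj x ⊆ ((G.neighborFinset x).erase v).erase y := by
      intro w hw
      simp only [mem_bipartiteBelow, T, mem_compl, mem_insert, not_or] at hw
      simp only [mem_erase, mem_neighborFinset]
      exact ⟨fun hwy => hw.1.2 (hwy ▸ hyv), hw.1.1, hw.2.symm⟩
    have hxv : v ∈ G.neighborFinset x :=
      (mem_neighborFinset ..).2 ((mem_neighborFinset ..).1 hx).symm
    have := card_le_card hsub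
    rw [card_erase_of_mem (mem_erase.2 ⟨((mem_neighborFinset ..).1 hyv).ne', hyx⟩),
      card_erase_of_mem hxv, card_neighborFinset_eq_degree, hcubic x] at this
    exact this
  have hT_to_N : ∀ w ∈ T, 2 ≤ #(N.bipartiteAbove G.Adj w) := by
    intro w hw
    have hsub : G.neighborFinset w ⊆ N.bipartiteAbove G.Adj w ∪ T.erase w := by
      intro x hx
      rw [mem_neighborFinset] at hx
      by_cases hxT : x ∈ T
      · exact mem_union_right _ (mem_erase.2 ⟨hx.ne', hxT⟩)
      · simp only [T, mem_compl, mem_insert, not_or] at hw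
        simp only [T, mem_compl, not_not, mem_insert] at hxT
        rcases hxT with rfl | hxN
        · exact absurd ((mem_neighborFinset ..).2 hx.symm) hw.2
        · exact mem_union_left _ ((mem_bipartiteAbove _).2 ⟨hxN, hx⟩)
    have := (card_le_card hsub).trans (card_union_le _ _)
    rw [card_neighborFinset_eq_degree, hcubic w, card_erase_of_mem hw, hT] at this
    omega
  have hcount := sum_card_bipartiteAbove_eq_sum_card_bipartiteBelow (s := T) (t := N) G.Adj
  have hlower : #T * 2 ≤ ∑ w ∈ T, #(N.bipartiteAbove G.Adj w) := card_nsmul_le_sum _ _ _ hT_to_N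
  have hupper : ∑ x ∈ N, #(T.bipartiteBelow G.Adj x) ≤ #N * 1 := sum_le_card_nsmul _ _ _ hN_to_T
  omega

theorem exists_isFairDomSet_pair (hcard : Fintype.card V = 6)
    (hcubic : G.IsRegularOfDegree 3) (v : V) : ∃ u ≠ v, IsFairDomSet G {v, u} := by
  classical
  obtain ⟨u, hvu, hdisj⟩ := exists_adj_disjoint_neighborFinset hcard hcubic v
  have hcover : G.neighborFinset v ∪ G.neighborFinset u = univ := by
    refine eq_univ_of_card _ ?_
    rw [card_union_of_disjoint hdisj, card_neighborFinset_eq_degree,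
      card_neighborFinset_eq_degree, hcubic v, hcubic u, hcard]
  refine ⟨u, hvu.ne', isFairDomSet_pair_of_adj_iff_not_adj fun w _ _ => ?_⟩
  have hw := mem_union.1 (hcover ▸ mem_univ w)
  rw [adj_comm G w, adj_comm G w, ← mem_neighborFinset, ← mem_neighborFinset]
  exact ⟨fun h => Finset.disjoint_left.1 hdisj h, hw.resolve_right⟩

end

theorem stmt_11 {V : Type*} [Fintype V] (G : SimpleGraph V) [DecidableRel G.Adj]
    (hcard : Fintype.card V = 6) (hcubic : G.IsRegularOfDegree 3) :
    fairCoalitionNumber G = 6 := by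
  rw [← hcard]
  refine fairCoalitionNumber_eq_card_of_forall_pair
    (fun v => not_isFairDomSet_singleton_of_degree_lt ?_) (exists_isFairDomSet_pair hcard hcubic)
  rw [hcubic v, hcard]
  norm_num
end
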